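/- arXiv:2112.08080 — 2 statements merged into one kernel-verified Lean document; each statement's English description precedes it below -/
import Mathlib

section
/- Let F : R^n ⇉ R^n and let (x̄, ȳ) ∈ gph F. Suppose F is SCD semismooth* at (x̄, ȳ): for every ε > 0 there is δ > 0 such that |⟨x*, x−x̄⟩ − ⟨y*, y−ȳ⟩| ≤ ε‖(x,y)−(x̄,ȳ)‖‖(x*,y*)‖ for all (x,y) ∈ gph F within distance δ of (x̄,ȳ) and all (y*,x*) in any L ∈ S*F(x,y). Then for every ε > 0 there is δ > 0 such that ‖x − C_Lᵀ(y − ȳ) − x̄‖ ≤ ε √(n(1+‖C_L‖²)) ‖(x,y)−(x̄,ȳ)‖ for every (x,y) ∈ gph F within distance δ of (x̄,ȳ) and every regular L ∈ S*F(x,y), where C_L is the unique matrix with L = rge(C_L, I). -/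
/-!
Test the semismooth* inequality with the elements `(C eᵢ, eᵢ) ∈ L`, `eᵢ` the standard basis.
Its left-hand side `⟨eᵢ, x − x̄⟩ − ⟨C eᵢ, y − ȳ⟩` is the `i`-th coordinate of
`x − x̄ − Cᵀ(y − ȳ)`, and `‖(eᵢ, C eᵢ)‖ ≤ √(1 + ‖C‖²)`. A vector whose `n` coordinates are all
bounded by `M` has norm at most `√n M`.
-/

noncomputable section

abbrev Evec (n : ℕ) := EuclideanSpace ℝ (Fin n)
abbrev Vec2 (n : ℕ) := WithLp 2 (Evec n × Evec n)
def pairMk {n : ℕ} (u v : Evec n) : Vec2 n := (WithLp.equiv 2 (Evec n × Evec n)).symm (u, v)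

open Matrix RealInnerProductSpace

theorem OrthonormalBasis.norm_le_sqrt_card_mul_of_forall_norm_inner_le {ι 𝕜 E : Type*}
    [Fintype ι] [RCLike 𝕜] [NormedAddCommGroup E] [InnerProductSpace 𝕜 E]
    (b : OrthonormalBasis ι 𝕜 E) {x : E} {c : ℝ} (hc : 0 ≤ c) (h : ∀ i, ‖inner 𝕜 (b i) x‖ ≤ c) :
    ‖x‖ ≤ √(Fintype.card ι) * c :=
  (b.norm_le_card_mul_iSup_norm_inner x).trans <| by
    gcongr
    exact Real.iSup_le h hc

theorem inner_sub_inner_apply_eq_inner_sub_adjoint {𝕜 E F : Type*} [RCLike 𝕜]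
    [NormedAddCommGroup E] [InnerProductSpace 𝕜 E] [CompleteSpace E]
    [NormedAddCommGroup F] [InnerProductSpace 𝕜 F] [CompleteSpace F]
    (T : E →L[𝕜] F) (v a : E) (c : F) :
    inner 𝕜 v a - inner 𝕜 (T v) c = inner 𝕜 v (a - T.adjoint c) := by
  rw [inner_sub_right, T.adjoint_inner_right]

theorem Matrix.toEuclideanCLM_transpose {ι : Type*} [Fintype ι] [DecidableEq ι]
    (C : Matrix ι ι ℝ) : toEuclideanCLM (𝕜 := ℝ) Cᵀ = (toEuclideanCLM (𝕜 := ℝ) C).adjoint := by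
  rw [← conjTranspose_eq_transpose_of_trivial, ← star_eq_conjTranspose, map_star,
    ContinuousLinearMap.star_eq_adjoint]

theorem norm_pairMk_sq {n : ℕ} (u v : Evec n) : ‖pairMk u v‖ ^ 2 = ‖u‖ ^ 2 + ‖v‖ ^ 2 :=
  WithLp.prod_norm_sq_eq_of_L2 _

theorem norm_pairMk_apply_le {n : ℕ} (T : Evec n →L[ℝ] Evec n) {v : Evec n} (hv : ‖v‖ = 1) :
    ‖pairMk v (T v)‖ ≤ √(1 + ‖T‖ ^ 2) := by
  refine Real.le_sqrt_of_sq_le ?_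
  rw [norm_pairMk_sq, hv, one_pow]
  gcongr
  simpa [hv] using T.le_opNorm v

theorem stmt15_general (n : ℕ) (F : Evec n → Set (Evec n))
    (SS : Evec n → Evec n → Set (Submodule ℝ (Vec2 n)))
    (xbar ybar : Evec n)
    (hss : ∀ ε > (0 : ℝ), ∃ δ > (0 : ℝ), ∀ x y, y ∈ F x →
      ‖pairMk (x - xbar) (y - ybar)‖ ≤ δ → ∀ L ∈ SS x y,
        ∀ ystar xstar : Evec n, pairMk ystar xstar ∈ L →
          |(inner ℝ xstar (x - xbar) : ℝ) - (inner ℝ ystar (y - ybar) : ℝ)| ≤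
            ε * ‖pairMk (x - xbar) (y - ybar)‖ * ‖pairMk xstar ystar‖) :
    ∀ ε > (0 : ℝ), ∃ δ > (0 : ℝ), ∀ x y, y ∈ F x →
      ‖pairMk (x - xbar) (y - ybar)‖ ≤ δ → ∀ L ∈ SS x y,
        (∀ ystar : Evec n, pairMk ystar 0 ∈ L → ystar = 0) →
        ∀ C : Matrix (Fin n) (Fin n) ℝ,
          (L : Set (Vec2 n)) = {z | ∃ v : Evec n, z = pairMk (WithLp.toLp 2 (C.mulVec v)) v} →
          ‖x - (show Evec n from WithLp.toLp 2 (C.transpose.mulVec (y - ybar))) - xbar‖ ≤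
            ε * Real.sqrt (n * (1 + ‖Matrix.toEuclideanCLM (𝕜 := ℝ) C‖ ^ 2)) *
              ‖pairMk (x - xbar) (y - ybar)‖ := by
  intro ε hε
  obtain ⟨δ, hδ, H⟩ := hss ε hε
  refine ⟨δ, hδ, fun x y hy hnear L hL _ C hC => ?_⟩
  set T := toEuclideanCLM (𝕜 := ℝ) C
  set D := ‖pairMk (x - xbar) (y - ybar)‖
  have hmem (v : Evec n) : pairMk (T v) v ∈ L := by
    change _ ∈ (L : Set (Vec2 n))
    rw [hC]
    exact ⟨v, rfl⟩
  have hresidual :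
      x - WithLp.toLp 2 (Cᵀ *ᵥ (y - ybar)) - xbar = (x - xbar) - T.adjoint (y - ybar) := by
    rw [← toEuclideanCLM_transpose]
    exact sub_right_comm _ _ _
  let b := EuclideanSpace.basisFun (Fin n) ℝ
  have hcoord (i : Fin n) :
      ‖⟪b i, (x - xbar) - T.adjoint (y - ybar)⟫‖ ≤ ε * D * √(1 + ‖T‖ ^ 2) := by
    rw [← inner_sub_inner_apply_eq_inner_sub_adjoint, Real.norm_eq_abs]
    refine (H x y hy hnear L hL _ _ (hmem (b i))).trans ?_
    gcongr
    exact norm_pairMk_apply_le T (b.orthonormal.1 i)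
  calc ‖x - WithLp.toLp 2 (Cᵀ *ᵥ (y - ybar)) - xbar‖
      ≤ √(Fintype.card (Fin n)) * (ε * D * √(1 + ‖T‖ ^ 2)) := by
        rw [hresidual]
        exact b.norm_le_sqrt_card_mul_of_forall_norm_inner_le (by positivity) hcoord
    _ = ε * √(n * (1 + ‖T‖ ^ 2)) * D := by
        rw [Fintype.card_fin, Real.sqrt_mul (Nat.cast_nonneg n)]
        ring

/-- Let `F : ℝ^n ⇉ ℝ^n`, `(x̄, ȳ) ∈ gph F`, and let `SS x y` denote the
collection `S*F(x,y)` of `n`-dimensional subspaces of `ℝ^{2n}`. If `F` is SCD semismooth* at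
`(x̄, ȳ)` (the ε-δ inequality holds for all `(y*,x*)` in any `L ∈ S*F(x,y)` with `(x,y)` in
`gph F` near `(x̄,ȳ)`), then for every `ε > 0` there is `δ > 0` such that
`‖x − C_Lᵀ(y − ȳ) − x̄‖ ≤ ε √(n(1+‖C_L‖²)) ‖(x,y)−(x̄,ȳ)‖` for every `(x,y) ∈ gph F` within
`δ` of `(x̄,ȳ)` and every regular `L ∈ S*F(x,y)`, `C_L` being the unique matrix with
`L = rge(C_L, I)`. -/
theorem stmt15 (n : ℕ) (F : Evec n → Set (Evec n))
    (SS : Evec n → Evec n → Set (Submodule ℝ (Vec2 n)))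
    (hdimSS : ∀ x y, y ∈ F x → ∀ L ∈ SS x y, Module.finrank ℝ L = n)
    (xbar ybar : Evec n) (hbar : ybar ∈ F xbar)
    (hss : ∀ ε > (0 : ℝ), ∃ δ > (0 : ℝ), ∀ x y, y ∈ F x →
      ‖pairMk (x - xbar) (y - ybar)‖ ≤ δ → ∀ L ∈ SS x y,
        ∀ ystar xstar : Evec n, pairMk ystar xstar ∈ L →
          |(inner ℝ xstar (x - xbar) : ℝ) - (inner ℝ ystar (y - ybar) : ℝ)| ≤
            ε * ‖pairMk (x - xbar) (y - ybar)‖ * ‖pairMk xstar ystar‖) :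
    ∀ ε > (0 : ℝ), ∃ δ > (0 : ℝ), ∀ x y, y ∈ F x →
      ‖pairMk (x - xbar) (y - ybar)‖ ≤ δ → ∀ L ∈ SS x y,
        (∀ ystar : Evec n, pairMk ystar 0 ∈ L → ystar = 0) →
        ∀ C : Matrix (Fin n) (Fin n) ℝ,
          (L : Set (Vec2 n)) = {z | ∃ v : Evec n, z = pairMk (WithLp.toLp 2 (C.mulVec v)) v} →
          ‖x - (show Evec n from WithLp.toLp 2 (C.transpose.mulVec (y - ybar))) - xbar‖ ≤
            ε * Real.sqrt (n * (1 + ‖Matrix.toEuclideanCLM (𝕜 := ℝ) C‖ ^ 2)) *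
              ‖pairMk (x - xbar) (y - ybar)‖ :=
  stmt15_general n F SS xbar ybar hss
end
end

section
/- Let B be a symmetric positive semidefinite n×n matrix with ‖B‖ ≤ 1 (spectral norm). Then I − B is also symmetric positive semidefinite, and the subspace L = rge(B, I−B) := {(Bu, (I−B)u) : u ∈ R^n} satisfies L = L*, where L* := {(−v*, u*) : (u*, v*) ∈ L^⊥}. -/
/-!
Positivity of `I - B` is the estimate `re ⟪B x, x⟫ ≤ ‖B‖ ‖x‖² ≤ ‖x‖²`.

For a symmetric `B`, a pair `(x, y)` is orthogonal to `rge(B, I - B)` exactly when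
`B x + (I - B) y = 0`. For such a pair, `u = x - y` gives `(B u, (I - B) u) = (-y, x)`;
conversely `(B u, (I - B) u) = (-y, x)` for `x = (I - B) u`, `y = -B u`, which satisfy the
equation because `B` commutes with `I - B`.
-/

noncomputable section

open scoped InnerProductSpace ComplexOrder

theorem ContinuousLinearMap.isPositive_one_sub_of_norm_le_one {𝕜 E : Type*} [RCLike 𝕜]
    [NormedAddCommGroup E] [InnerProductSpace 𝕜 E] {T : E →L[𝕜] E} (hT : T.IsSymmetric)
    (hT1 : ‖T‖ ≤ 1) : (1 - T).IsPositive := by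
  refine isPositive_def.mpr ⟨LinearMap.IsSymmetric.id.sub hT, fun x => ?_⟩
  have : RCLike.re ⟪T x, x⟫_𝕜 ≤ ‖x‖ ^ 2 :=
    calc RCLike.re ⟪T x, x⟫_𝕜 ≤ ‖T x‖ * ‖x‖ := re_inner_le_norm _ _
      _ ≤ ‖T‖ * ‖x‖ * ‖x‖ := by gcongr; exact T.le_opNorm x
      _ ≤ ‖x‖ ^ 2 := by nlinarith [norm_nonneg x]
  simpa [reApplyInnerSelf, inner_sub_left, ← real_inner_self_eq_norm_sq] using this

theorem Matrix.IsHermitian.posSemidef_one_sub {n 𝕜 : Type*} [Fintype n] [DecidableEq n]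
    [RCLike 𝕜] {B : Matrix n n 𝕜} (hB : B.IsHermitian)
    (hB1 : ‖Matrix.toEuclideanCLM (𝕜 := 𝕜) B‖ ≤ 1) : (1 - B).PosSemidef := by
  rw [← Matrix.isPositive_toEuclideanLin_iff, ← Matrix.coe_toEuclideanCLM_eq_toEuclideanLin,
    ContinuousLinearMap.isPositive_toLinearMap_iff, map_sub, map_one]
  exact ContinuousLinearMap.isPositive_one_sub_of_norm_le_one
    (Matrix.isSymmetric_toEuclideanLin_iff.mpr hB) hB1

section PairRange

variable {E : Type*} [NormedAddCommGroup E] [InnerProductSpace ℝ E]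

/-- The subspace `rge(A, C)`. -/
def pairRange (A C : E →ₗ[ℝ] E) : Submodule ℝ (WithLp 2 (E × E)) :=
  LinearMap.range ((WithLp.linearEquiv 2 ℝ (E × E)).symm.toLinearMap ∘ₗ A.prod C)

/-- The set `L*`. -/
def adjointSet (L : Submodule ℝ (WithLp 2 (E × E))) : Set (WithLp 2 (E × E)) :=
  {z | ∃ u v : E, WithLp.toLp 2 (u, v) ∈ Lᗮ ∧ z = WithLp.toLp 2 (-v, u)}

theorem mem_pairRange {A C : E →ₗ[ℝ] E} {z : WithLp 2 (E × E)} :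
    z ∈ pairRange A C ↔ ∃ u, WithLp.toLp 2 (A u, C u) = z := by
  simp [pairRange]

theorem toLp_mem_orthogonal_pairRange_iff {A C : E →ₗ[ℝ] E} (hA : A.IsSymmetric)
    (hC : C.IsSymmetric) {x y : E} :
    WithLp.toLp 2 (x, y) ∈ (pairRange A C)ᗮ ↔ A x + C y = 0 := by
  have inner_eq : ∀ u, ⟪WithLp.toLp 2 (A u, C u), WithLp.toLp 2 (x, y)⟫_ℝ =
      ⟪u, A x + C y⟫_ℝ := fun u => by
    rw [WithLp.prod_inner_apply, inner_add_right, hA, hC]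
  simp only [Submodule.mem_orthogonal, mem_pairRange, forall_exists_index,
    forall_apply_eq_imp_iff, inner_eq]
  exact ⟨fun h => inner_self_eq_zero.mp (h _), fun h u => by rw [h, inner_zero_right]⟩

theorem adjointSet_pairRange_one_sub {T : E →ₗ[ℝ] E} (hT : T.IsSymmetric) :
    adjointSet (pairRange T (1 - T)) = pairRange T (1 - T) := by
  have hT' : (1 - T).IsSymmetric := LinearMap.IsSymmetric.id.sub hT
  ext z
  simp only [adjointSet, Set.mem_ofPred_eq, SetLike.mem_coe, mem_pairRange,
    toLp_mem_orthogonal_pairRange_iff hT hT', LinearMap.sub_apply, Module.End.one_apply]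
  constructor
  · rintro ⟨u, v, huv, rfl⟩
    have hTu : T u = T v - v := by rw [← sub_eq_zero, ← huv]; abel
    exact ⟨u - v, by simp [hTu]⟩
  · rintro ⟨w, rfl⟩
    exact ⟨w - T w, -T w, by simp, by simp⟩

end PairRange

/-- If `B` is symmetric positive semidefinite with `‖B‖ ≤ 1` (spectral
norm), then `I − B` is symmetric positive semidefinite, and the subspace
`L = rge(B, I−B) = {(Bu, (I−B)u)}` satisfies `L = L*`, where
`L* = {(−v*, u*) : (u*, v*) ∈ L^⊥}` (here the submodule `Ls` characterized by `hLs`). -/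
theorem stmt16 (n : ℕ) (B : Matrix (Fin n) (Fin n) ℝ)
    (hB : B.PosSemidef) (hBnorm : ‖Matrix.toEuclideanCLM (𝕜 := ℝ) B‖ ≤ 1)
    (L : Submodule ℝ (Vec2 n))
    (hL : (L : Set (Vec2 n)) =
      {z | ∃ u : Evec n, z = pairMk (WithLp.toLp 2 (B.mulVec u)) (WithLp.toLp 2 ((1 - B).mulVec u))})
    (Ls : Submodule ℝ (Vec2 n))
    (hLs : (Ls : Set (Vec2 n)) =
      {z | ∃ u v : Evec n, pairMk u v ∈ Lᗮ ∧ z = pairMk (-v) u}) :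
    (1 - B).PosSemidef ∧ Ls = L := by
  set T := Matrix.toEuclideanLin B
  have hT : T.IsSymmetric := Matrix.isSymmetric_toEuclideanLin_iff.mpr hB.isHermitian
  have hLT : L = pairRange T (1 - T) := by
    refine SetLike.coe_injective (hL.trans (Set.ext fun z => ?_))
    simp [mem_pairRange, T, pairMk, Matrix.toLpLin_apply, Matrix.sub_mulVec, eq_comm]
  refine ⟨hB.isHermitian.posSemidef_one_sub hBnorm, SetLike.coe_injective ?_⟩
  rw [hLs]
  change adjointSet L = L
  rw [hLT, adjointSet_pairRange_one_sub hT]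
end
end
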